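/- Define G_α(x) = 1 + (1+x)^α − (1+x)^{(α+1)/2} − (1−x)^{(1−α)/2} for x ∈ [0,1]. For every α ∈ [0,1], G_α'''(x) ≥ 0 on [0,1], and consequently G_α(x) ≥ ((α−1)²/4) x² for x ∈ [0,1]. -/

import Mathlib

/-!
Write `q = (α + 1) / 2` and `p = (1 - α) / 2 = 1 - q`. Then `G'''` is a sum of three power terms
`c_a (1+x)^(α-3) - c_q (1+x)^(q-3) + c_p (1-x)^(p-3)` with `c_s = s (s-1) (s-2) ≥ 0`. On `[0, 1)`
we have `(1+x)^(q-3) ≤ 1 ≤ (1-x)^(p-3)`, and `c_p - c_q = q (1-q) (2q-1) = α (1-α²) / 4 ≥ 0`,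
so `G''' ≥ 0`. Since `G(0) = G'(0) = 0` and `G''(0) = (α-1)²/2`, integrating three times gives
`G(x) ≥ (α-1)² x² / 4` on `[0, 1)`; at `x = 1`, with `t = 2^q`, `G(1) = 1 + t²/2 - t ≥ 1/2`.
-/

open Set Filter Topology

theorem le_of_hasDerivAt_le {f g f' g' : ℝ → ℝ} {a b : ℝ}
    (hf : ∀ y ∈ Icc a b, HasDerivAt f (f' y) y) (hg : ∀ y ∈ Icc a b, HasDerivAt g (g' y) y)
    (ha : f a ≤ g a) (hderiv : ∀ y ∈ Ico a b, f' y ≤ g' y) :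
    ∀ x ∈ Icc a b, f x ≤ g x :=
  image_le_of_deriv_right_le_deriv_boundary
    (fun y hy => (hf y hy).continuousAt.continuousWithinAt)
    (fun y hy => (hf y (Ico_subset_Icc_self hy)).hasDerivWithinAt) ha
    (fun y hy => (hg y hy).continuousAt.continuousWithinAt)
    (fun y hy => (hg y (Ico_subset_Icc_self hy)).hasDerivWithinAt) hderiv

theorem taylor_two_le_of_third_deriv_nonneg {f f' f'' f''' : ℝ → ℝ} {a b : ℝ}
    (hf : ∀ y ∈ Icc a b, HasDerivAt f (f' y) y) (hf' : ∀ y ∈ Icc a b, HasDerivAt f' (f'' y) y)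
    (hf'' : ∀ y ∈ Icc a b, HasDerivAt f'' (f''' y) y) (hf''' : ∀ y ∈ Ico a b, 0 ≤ f''' y) :
    ∀ x ∈ Icc a b, f a + f' a * (x - a) + f'' a / 2 * (x - a) ^ 2 ≤ f x := by
  have h2 : ∀ x ∈ Icc a b, f'' a ≤ f'' x :=
    le_of_hasDerivAt_le (fun y _ => hasDerivAt_const y _) hf'' le_rfl hf'''
  have h1 : ∀ x ∈ Icc a b, f' a + f'' a * (x - a) ≤ f' x := by
    refine le_of_hasDerivAt_le (f' := fun _ => f'' a) (fun y _ => ?_) hf' (by simp)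
      fun y hy => h2 y (Ico_subset_Icc_self hy)
    exact ((((hasDerivAt_id' y).sub_const a).const_mul (f'' a)).const_add (f' a)).congr_deriv
      (mul_one _)
  refine le_of_hasDerivAt_le (f' := fun y => f' a + f'' a * (y - a)) (fun y _ => ?_) hf
    (by simp) fun y hy => h1 y (Ico_subset_Icc_self hy)
  have := ((((hasDerivAt_id' y).sub_const a).const_mul (f' a)).const_add (f a)).add
    ((((hasDerivAt_id' y).sub_const a).pow 2).const_mul (f'' a / 2))
  exact this.congr_deriv (by norm_num; ring)

theorem deriv_eq_zero_of_tendsto_atTop_nhdsLT {f : ℝ → ℝ} {a : ℝ}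
    (h : Tendsto f (𝓝[<] a) atTop) : deriv f a = 0 :=
  deriv_zero_of_not_differentiableAt fun hd =>
    not_tendsto_atTop_of_tendsto_nhds (hd.continuousAt.tendsto.mono_left nhdsWithin_le_nhds) h

noncomputable section

namespace Galpha

variable (a q p : ℝ)

def G (x : ℝ) : ℝ := 1 + (1 + x) ^ a - (1 + x) ^ q - (1 - x) ^ p

def G' (x : ℝ) : ℝ := a * (1 + x) ^ (a - 1) - q * (1 + x) ^ (q - 1) + p * (1 - x) ^ (p - 1)

def G'' (x : ℝ) : ℝ :=
  a * (a - 1) * (1 + x) ^ (a - 2) - q * (q - 1) * (1 + x) ^ (q - 2)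
    - p * (p - 1) * (1 - x) ^ (p - 2)

def G''' (x : ℝ) : ℝ :=
  a * (a - 1) * (a - 2) * (1 + x) ^ (a - 3) - q * (q - 1) * (q - 2) * (1 + x) ^ (q - 3)
    + p * (p - 1) * (p - 2) * (1 - x) ^ (p - 3)

variable {a q p}

theorem hasDerivAt_one_add_rpow (c s : ℝ) {y : ℝ} (hy : 0 < 1 + y) :
    HasDerivAt (fun x => c * (1 + x) ^ s) (c * s * (1 + y) ^ (s - 1)) y := by
  simpa [mul_assoc] using (((hasDerivAt_id' y).const_add 1).rpow_const (p := s)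
    (Or.inl hy.ne')).const_mul c

theorem hasDerivAt_one_sub_rpow (c s : ℝ) {y : ℝ} (hy : 0 < 1 - y) :
    HasDerivAt (fun x => c * (1 - x) ^ s) (-(c * s) * (1 - y) ^ (s - 1)) y := by
  simpa [mul_assoc] using (((hasDerivAt_id' y).const_sub 1).rpow_const (p := s)
    (Or.inl hy.ne')).const_mul c

theorem hasDerivAt_G {y : ℝ} (hy : y ∈ Ioo (-1) 1) : HasDerivAt (G a q p) (G' a q p y) y := by
  have h := (((hasDerivAt_one_add_rpow 1 a (by linarith [hy.1])).const_add 1).sub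
    (hasDerivAt_one_add_rpow 1 q (by linarith [hy.1]))).sub
    (hasDerivAt_one_sub_rpow 1 p (by linarith [hy.2]))
  simp only [one_mul] at h
  exact h.congr_deriv (by unfold G'; ring)

theorem hasDerivAt_G' {y : ℝ} (hy : y ∈ Ioo (-1) 1) :
    HasDerivAt (G' a q p) (G'' a q p y) y := by
  have h := ((hasDerivAt_one_add_rpow a (a - 1) (by linarith [hy.1])).sub
    (hasDerivAt_one_add_rpow q (q - 1) (by linarith [hy.1]))).add
    (hasDerivAt_one_sub_rpow p (p - 1) (by linarith [hy.2]))
  exact h.congr_deriv (by unfold G''; ring_nf)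

theorem hasDerivAt_G'' {y : ℝ} (hy : y ∈ Ioo (-1) 1) :
    HasDerivAt (G'' a q p) (G''' a q p y) y := by
  have h := ((hasDerivAt_one_add_rpow (a * (a - 1)) (a - 2) (by linarith [hy.1])).sub
    (hasDerivAt_one_add_rpow (q * (q - 1)) (q - 2) (by linarith [hy.1]))).sub
    (hasDerivAt_one_sub_rpow (p * (p - 1)) (p - 2) (by linarith [hy.2]))
  exact h.congr_deriv (by unfold G'''; ring_nf)

theorem eqOn_deriv_G : EqOn (deriv (G a q p)) (G' a q p) (Ioo (-1) 1) :=
  fun _ hy => (hasDerivAt_G hy).deriv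

theorem eqOn_deriv_deriv_G : EqOn (deriv (deriv (G a q p))) (G'' a q p) (Ioo (-1) 1) :=
  fun _ hy => (eqOn_deriv_G.deriv isOpen_Ioo hy).trans (hasDerivAt_G' hy).deriv

theorem eqOn_iteratedDeriv_three_G : EqOn (iteratedDeriv 3 (G a q p)) (G''' a q p) (Ioo (-1) 1) :=
  fun _ hy => by
    rw [iteratedDeriv_eq_iterate]
    exact (eqOn_deriv_deriv_G.deriv isOpen_Ioo hy).trans (hasDerivAt_G'' hy).deriv

theorem tendsto_G''_nhdsLT_one (hp0 : 0 < p) (hp1 : p < 1) :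
    Tendsto (G'' a q p) (𝓝[<] 1) atTop := by
  have hsplit : G'' a q p = fun x => (a * (a - 1) * (1 + x) ^ (a - 2)
      - q * (q - 1) * (1 + x) ^ (q - 2)) + p * (1 - p) * (1 - x) ^ (p - 2) := by
    funext x; unfold G''; ring
  have hbounded : ContinuousAt (fun x : ℝ => a * (a - 1) * (1 + x) ^ (a - 2)
      - q * (q - 1) * (1 + x) ^ (q - 2)) 1 := by
    fun_prop (disch := norm_num)
  have hgap : Tendsto (fun x : ℝ => 1 - x) (𝓝[<] 1) (𝓝[>] 0) :=
    tendsto_nhdsWithin_of_tendsto_nhds_of_eventually_within _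
      ((continuous_sub_left (1 : ℝ)).tendsto' 1 0 (sub_self 1) |>.mono_left nhdsWithin_le_nhds)
      (eventually_nhdsWithin_of_forall fun _ hx => mem_Ioi.2 (sub_pos.2 hx))
  rw [hsplit]
  exact (hbounded.tendsto.mono_left nhdsWithin_le_nhds).add_atTop
    (((tendsto_rpow_neg_nhdsGT_zero (by linarith)).comp hgap).const_mul_atTop
      (mul_pos hp0 (by linarith)))

/-- At the endpoint the blow-up of `G''` makes `G` not thrice differentiable, so Lean's
`iteratedDeriv 3` takes the junk value `0` there. -/
theorem iteratedDeriv_three_G_one (hp0 : 0 < p) (hp1 : p < 1) :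
    iteratedDeriv 3 (G a q p) 1 = 0 := by
  rw [iteratedDeriv_eq_iterate]
  refine deriv_eq_zero_of_tendsto_atTop_nhdsLT
    ((tendsto_G''_nhdsLT_one (a := a) (q := q) hp0 hp1).congr' ?_)
  filter_upwards [Ioo_mem_nhdsLT (show (-1 : ℝ) < 1 by norm_num)] with y hy
  exact (eqOn_deriv_deriv_G hy).symm

theorem G'''_nonneg {α y : ℝ} (hα : α ∈ Icc (0 : ℝ) 1) (hy : y ∈ Ico (0 : ℝ) 1) :
    0 ≤ G''' α ((α + 1) / 2) ((1 - α) / 2) y := by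
  obtain ⟨hα0, hα1⟩ := hα
  set q := (α + 1) / 2 with hq
  set p := (1 - α) / 2 with hp
  have hA : 0 ≤ α * (α - 1) * (α - 2) * (1 + y) ^ (α - 3) :=
    mul_nonneg (by nlinarith [mul_nonneg hα0 (sub_nonneg.2 hα1)])
      (Real.rpow_nonneg (by linarith [hy.1]) _)
  have hB : 0 ≤ q * (q - 1) * (q - 2) := by
    rw [hq]
    nlinarith [mul_nonneg (mul_nonneg (by linarith : (0 : ℝ) ≤ 1 + α) (sub_nonneg.2 hα1))
      (by linarith : (0 : ℝ) ≤ 3 - α)]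
  have hBC : q * (q - 1) * (q - 2) ≤ p * (p - 1) * (p - 2) := by
    rw [hq, hp]
    nlinarith [mul_nonneg (mul_nonneg hα0 (sub_nonneg.2 hα1)) (by linarith : (0 : ℝ) ≤ 1 + α)]
  have hX : (1 + y) ^ (q - 3) ≤ 1 :=
    Real.rpow_le_one_of_one_le_of_nonpos (by linarith [hy.1]) (by linarith [hq])
  have hY : 1 ≤ (1 - y) ^ (p - 3) :=
    Real.one_le_rpow_of_pos_of_le_one_of_nonpos (by linarith [hy.2]) (by linarith [hy.1])
      (by linarith [hp])
  unfold G'''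
  linarith [mul_le_mul_of_nonneg_left hX hB, mul_le_mul_of_nonneg_left hY (hB.trans hBC)]

theorem sq_mul_le_G {α x : ℝ} (hα : α ∈ Icc (0 : ℝ) 1) (hx : x ∈ Ico (0 : ℝ) 1) :
    (α - 1) ^ 2 / 4 * x ^ 2 ≤ G α ((α + 1) / 2) ((1 - α) / 2) x := by
  have hsub : Icc 0 x ⊆ Ioo (-1) 1 := fun y hy => ⟨by linarith [hy.1], by linarith [hy.2, hx.2]⟩
  have h := taylor_two_le_of_third_deriv_nonneg (fun y hy => hasDerivAt_G (hsub hy))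
    (fun y hy => hasDerivAt_G' (hsub hy)) (fun y hy => hasDerivAt_G'' (hsub hy))
    (fun y hy => G'''_nonneg hα ⟨hy.1, hy.2.trans hx.2⟩) x ⟨hx.1, le_rfl⟩
  convert h using 1
  simp [G, G', G'']
  ring

theorem sq_div_four_le_G_one {α : ℝ} (hα : α ∈ Ico (0 : ℝ) 1) :
    (α - 1) ^ 2 / 4 * 1 ^ 2 ≤ G α ((α + 1) / 2) ((1 - α) / 2) 1 := by
  have hsq : (2 : ℝ) ^ ((α + 1) / 2) * 2 ^ ((α + 1) / 2) = 2 * 2 ^ α := by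
    rw [← Real.rpow_add two_pos, add_halves, Real.rpow_add_one two_ne_zero, mul_comm]
  unfold G
  rw [sub_self, Real.zero_rpow (by linarith [hα.2]), one_add_one_eq_two]
  nlinarith [sq_nonneg ((2 : ℝ) ^ ((α + 1) / 2) - 1), mul_nonneg hα.1 (by linarith [hα.2] :
    (0 : ℝ) ≤ 2 - α)]

theorem G_one_one_zero : G 1 1 0 = 0 := by
  funext x
  simp [G]

end Galpha

end

open Galpha

theorem Galpha_third_deriv_nonneg (α : ℝ) (hα : α ∈ Set.Icc (0 : ℝ) 1) :
    (∀ x ∈ Set.Icc (0 : ℝ) 1,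
      0 ≤ iteratedDeriv 3
        (fun x : ℝ => 1 + (1 + x) ^ α - (1 + x) ^ ((α + 1) / 2) - (1 - x) ^ ((1 - α) / 2)) x) ∧
    (∀ x ∈ Set.Icc (0 : ℝ) 1,
      ((α - 1) ^ 2 / 4) * x ^ 2 ≤
        1 + (1 + x) ^ α - (1 + x) ^ ((α + 1) / 2) - (1 - x) ^ ((1 - α) / 2)) := by
  obtain ⟨hα0, hα1⟩ := hα
  change (∀ x ∈ Icc (0 : ℝ) 1, 0 ≤ iteratedDeriv 3 (G α ((α + 1) / 2) ((1 - α) / 2)) x) ∧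
    ∀ x ∈ Icc (0 : ℝ) 1, (α - 1) ^ 2 / 4 * x ^ 2 ≤ G α ((α + 1) / 2) ((1 - α) / 2) x
  rcases hα1.eq_or_lt with rfl | hα1
  · norm_num [G_one_one_zero]
  refine ⟨fun x hx => ?_, fun x hx => ?_⟩
  · rcases hx.2.lt_or_eq with hx1 | rfl
    · rw [eqOn_iteratedDeriv_three_G ⟨by linarith [hx.1], hx1⟩]
      exact G'''_nonneg ⟨hα0, hα1.le⟩ ⟨hx.1, hx1⟩
    · rw [iteratedDeriv_three_G_one (by linarith) (by linarith)]
  · rcases hx.2.lt_or_eq with hx1 | rfl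
    · exact sq_mul_le_G ⟨hα0, hα1.le⟩ ⟨hx.1, hx1⟩
    · exact sq_div_four_le_G_one ⟨hα0, hα1⟩
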